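/- Let $G$ be a group, $y \in G$, and $H$ a finitely generated subgroup of $G$. If $y^m$ is a left Engel element of $G$ for some positive integer $m$, then the subgroup $H^{\langle y \rangle}$ generated by all conjugates of $H$ by powers of $y$ is finitely generated. -/

import Mathlib

/-- The commutator `[a,b] = a⁻¹ b⁻¹ a b`. -/
def pcomm {G : Type*} [Group G] (a b : G) : G := a⁻¹ * b⁻¹ * a * b

/-- The iterated Engel commutator `[g,ₙ a]`. -/
def pengel {G : Type*} [Group G] (g a : G) : ℕ → G
  | 0 => g
  | n + 1 => pcomm (pengel g a n) a

/-- `a` is a left Engel element. -/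
def IsLeftEngel {G : Type*} [Group G] (a : G) : Prop :=
  ∀ g : G, ∃ n : ℕ, 1 ≤ n ∧ pengel g a n = 1

/-!
Put `x = y ^ m`. Conjugation by `x⁻¹` sends `[g,ᵢ x]` to `[g,ᵢ x] * [g,ᵢ₊₁ x]`, so once
`[g,ₙ x] = 1` the commutators `[g,ᵢ x]`, `i ≤ n`, generate a subgroup that `x` normalizes (the
reverse inclusion is a descending induction from `[g,ₙ x] = 1`); it is therefore the subgroup
generated by the conjugates of `g` by powers of `x`. Writing exponents of `y` as `r + m q` with
`0 ≤ r < m`, the conjugates of `H = ⟨S⟩` by powers of `y` generate the same subgroup as the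
conjugates by powers of `x` of the finitely many elements `(y ^ r)⁻¹ * s * y ^ r`.
-/

section

open Subgroup

variable {G : Type*} [Group G]

section Engel

variable {g a : G} {n : ℕ}

lemma pengel_succ (g a : G) (n : ℕ) :
    pengel g a (n + 1) = (pengel g a n)⁻¹ * (a⁻¹ * pengel g a n * a) := by
  simp only [pengel, pcomm, mul_assoc]

lemma inv_mul_pengel_mul (g a : G) (n : ℕ) :
    a⁻¹ * pengel g a n * a = pengel g a n * pengel g a (n + 1) := by
  rw [pengel_succ, mul_inv_cancel_left]

lemma pengel_eq_one_of_le {k : ℕ} (h : pengel g a n = 1) (hk : n ≤ k) : pengel g a k = 1 := by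
  induction k, hk using Nat.le_induction with
  | base => exact h
  | succ k _ ih => simp [pengel_succ, ih]

lemma pengel_mem_of_mem_normalizer {M : Subgroup G} (hg : g ∈ M)
    (ha : a ∈ normalizer (M : Set G)) (k : ℕ) : pengel g a k ∈ M := by
  induction k with
  | zero => exact hg
  | succ k ih =>
    rw [pengel_succ]
    exact mul_mem (inv_mem ih) ((mem_normalizer_iff''.mp ha _).mp ih)

lemma pengel_mem_closure_pengel (h : pengel g a n = 1) (k : ℕ) :
    pengel g a k ∈ closure (pengel g a '' Set.Iic n) := by
  rcases le_total k n with hk | hk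
  · exact subset_closure ⟨k, hk, rfl⟩
  · rw [pengel_eq_one_of_le h hk]
    exact one_mem _

lemma map_conj_inv_closure_pengel_le (h : pengel g a n = 1) :
    (closure (pengel g a '' Set.Iic n)).map (MulAut.conj a⁻¹) ≤
      closure (pengel g a '' Set.Iic n) := by
  rw [MonoidHom.map_closure, closure_le]
  rintro _ ⟨_, ⟨k, -, rfl⟩, rfl⟩
  simp only [MonoidHom.coe_coe, MulAut.conj_apply, inv_inv, inv_mul_pengel_mul]
  exact mul_mem (pengel_mem_closure_pengel h k) (pengel_mem_closure_pengel h (k + 1))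

lemma closure_pengel_le_map_conj_inv (h : pengel g a n = 1) :
    closure (pengel g a '' Set.Iic n) ≤
      (closure (pengel g a '' Set.Iic n)).map (MulAut.conj a⁻¹) := by
  rw [closure_le]
  rintro _ ⟨k, hk, rfl⟩
  induction hk using Nat.decreasingInduction with
  | self => rw [h]; exact one_mem _
  | of_succ k hk ih =>
    have hconj : a⁻¹ * pengel g a k * a ∈
        (closure (pengel g a '' Set.Iic n)).map (MulAut.conj a⁻¹) :=
      ⟨pengel g a k, pengel_mem_closure_pengel h k, by simp⟩
    rw [inv_mul_pengel_mul] at hconj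
    simpa using mul_mem hconj (inv_mem ih)

lemma mem_normalizer_closure_pengel (h : pengel g a n = 1) :
    a ∈ normalizer (closure (pengel g a '' Set.Iic n) : Set G) := by
  rw [← inv_mem_iff, mem_normalizer_iff_map_conj_eq]
  exact (map_conj_inv_closure_pengel_le h).antisymm (closure_pengel_le_map_conj_inv h)

end Engel

section ZPowConjugates

/-- `closure (zpowConjugates y S)` is the paper's `⟨S⟩^⟨y⟩`. -/
def zpowConjugates (y : G) (S : Set G) : Set G :=
  {z | ∃ s ∈ S, ∃ i : ℤ, z = (y ^ i)⁻¹ * s * y ^ i}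

variable {y : G} {S : Set G}

lemma subset_zpowConjugates : S ⊆ zpowConjugates y S :=
  fun s hs => ⟨s, hs, 0, by simp⟩

lemma mem_normalizer_zpowConjugates : y ∈ normalizer (zpowConjugates y S) := by
  rw [mem_set_normalizer_iff'']
  intro z
  constructor
  · rintro ⟨s, hs, i, rfl⟩
    exact ⟨s, hs, i + 1, by rw [zpow_add_one]; group⟩
  · rintro ⟨s, hs, i, hz⟩
    refine ⟨s, hs, i - 1, ?_⟩
    rw [zpow_sub_one]
    calc z = y * (y⁻¹ * z * y) * y⁻¹ := by group
      _ = _ := by rw [hz]; group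

lemma closure_zpowConjugates_le {M : Subgroup G} (hS : S ⊆ M)
    (hy : y ∈ normalizer (M : Set G)) :
    closure (zpowConjugates y S) ≤ M := by
  rw [closure_le]
  rintro _ ⟨s, hs, i, rfl⟩
  exact (mem_normalizer_iff''.mp (zpow_mem hy i) s).mp (hS hs)

lemma closure_zpowConjugates_closure (y : G) (S : Set G) :
    closure (zpowConjugates y (closure S)) = closure (zpowConjugates y S) := by
  refine le_antisymm (closure_zpowConjugates_le ?_ ?_)
    (closure_mono fun z ⟨s, hs, i, hz⟩ => ⟨s, subset_closure hs, i, hz⟩)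
  · exact fun _ hs => closure_mono subset_zpowConjugates hs
  · exact normalizer_le_normalizer_closure _ mem_normalizer_zpowConjugates

lemma zpowConjugates_eq_biUnion (y : G) (S : Set G) :
    zpowConjugates y S = ⋃ s ∈ S, zpowConjugates y {s} := by
  ext z
  simp [zpowConjugates]

lemma zpowConjugates_eq_zpowConjugates_pow {m : ℕ} (hm : m ≠ 0) :
    zpowConjugates y S
      = zpowConjugates (y ^ m)
          (Set.image2 (fun s (r : ℕ) => (y ^ r)⁻¹ * s * y ^ r) S (Set.Iio m)) := by
  have hconj (s : G) (r : ℕ) (q : ℤ) :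
      (y ^ ((r : ℤ) + m * q))⁻¹ * s * y ^ ((r : ℤ) + m * q)
        = ((y ^ m) ^ q)⁻¹ * ((y ^ r)⁻¹ * s * y ^ r) * (y ^ m) ^ q := by
    rw [zpow_add, zpow_mul, zpow_natCast, zpow_natCast]
    group
  ext z
  constructor
  · rintro ⟨s, hs, i, rfl⟩
    have hr : 0 ≤ i % m := Int.emod_nonneg i (by omega)
    refine ⟨_, ⟨s, hs, (i % m).toNat, ?_, rfl⟩, i / m, ?_⟩
    · have hlt := Int.emod_lt_of_pos i (by omega : (0 : ℤ) < m)
      simp only [Set.mem_Iio]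
      omega
    · rw [← hconj, Int.toNat_of_nonneg hr, add_comm, Int.mul_ediv_add_emod]
  · rintro ⟨_, ⟨s, hs, r, -, rfl⟩, q, rfl⟩
    exact ⟨s, hs, r + m * q, (hconj s r q).symm⟩

end ZPowConjugates

lemma closure_zpowConjugates_singleton {g a : G} {n : ℕ} (h : pengel g a n = 1) :
    closure (zpowConjugates a {g}) = closure (pengel g a '' Set.Iic n) := by
  refine le_antisymm ?_ ?_
  · refine closure_zpowConjugates_le ?_ (mem_normalizer_closure_pengel h)
    exact Set.singleton_subset_iff.mpr (pengel_mem_closure_pengel h 0)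
  · rw [closure_le]
    rintro _ ⟨k, -, rfl⟩
    exact pengel_mem_of_mem_normalizer
      (subset_closure (subset_zpowConjugates (Set.mem_singleton g)))
      (normalizer_le_normalizer_closure _ mem_normalizer_zpowConjugates) k

lemma IsLeftEngel.fg_closure_zpowConjugates {a : G} (ha : IsLeftEngel a) {S : Set G}
    (hS : S.Finite) : (closure (zpowConjugates a S)).FG := by
  choose n _ hn using ha
  have hgen :
      closure (zpowConjugates a S) = closure (⋃ s ∈ S, pengel s a '' Set.Iic (n s)) := by
    simp only [zpowConjugates_eq_biUnion a S, Subgroup.closure_iUnion,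
      closure_zpowConjugates_singleton (hn _)]
  rw [hgen]
  exact (fg_iff _).mpr ⟨_, rfl, hS.biUnion fun s _ => (Set.finite_Iic _).image _⟩

end

theorem stmt_1 {G : Type*} [Group G] (y : G) (H : Subgroup G) (hH : H.FG)
    (m : ℕ) (hm : 1 ≤ m) (hEngel : IsLeftEngel (y ^ m)) :
    (Subgroup.closure {z : G | ∃ h ∈ H, ∃ i : ℤ, z = (y ^ i)⁻¹ * h * y ^ i}).FG := by
  obtain ⟨S, rfl⟩ := hH
  change (Subgroup.closure (zpowConjugates y (Subgroup.closure (S : Set G)))).FG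
  rw [closure_zpowConjugates_closure, zpowConjugates_eq_zpowConjugates_pow (by omega : m ≠ 0)]
  exact hEngel.fg_closure_zpowConjugates (S.finite_toSet.image2 _ (Set.finite_Iio m))
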